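/- arXiv:math/0412542 — 5 statements merged into one kernel-verified Lean document; each statement's English description precedes it below -/
import Mathlib

section
/- Let n ∈ ℕ^M be a vector of positive integers and let R_n = {(k_+,k_-) ∈ ℤ_+^M × ℤ_+^M : n∘k_+ = n∘k_-} where n∘k = Σ_l n_l k_l. Call k ∈ R_n minimal if k ≠ 0 and k cannot be written as k' + k'' with k', k'' ∈ R_n both nonzero. Then every minimal element k = (k_+,k_-) satisfies k_{+l} ≤ Σ_{j=1}^M n_j and k_{-l} ≤ Σ_{j=1}^M n_j for every l = 1,…,M. Consequently the set of minimal elements of R_n is finite. -/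
/-!
If a minimal resonance `(a, b)` had `a l > Σ n`, then `n l · Σ n < n ∘ a = n ∘ b` forces some
`b m ≥ n l`; since also `a l > n m`, the elementary resonance `(n m · e_l, n l · e_m)` lies
below `(a, b)`. Resonances are closed under subtraction, so minimality makes `(a, b)` equal to
it, and then `a l = n m ≤ Σ n`, a contradiction. The bound for `b` follows by symmetry.
-/

/-- The resonance semigroup `R_n ⊂ ℤ_+^M × ℤ_+^M`. -/
def ResonanceSet (M : ℕ) (n : Fin M → ℕ) : Set ((Fin M → ℕ) × (Fin M → ℕ)) :=
  {k | ∑ l, n l * k.1 l = ∑ l, n l * k.2 l}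

/-- `k` is a minimal resonance element: nonzero and not a sum of two nonzero
elements of `R_n`. -/
def IsMinimalResonance (M : ℕ) (n : Fin M → ℕ)
    (k : (Fin M → ℕ) × (Fin M → ℕ)) : Prop :=
  k ∈ ResonanceSet M n ∧ k ≠ 0 ∧
    ∀ k' k'', k' ∈ ResonanceSet M n → k'' ∈ ResonanceSet M n →
      k' ≠ 0 → k'' ≠ 0 → k ≠ k' + k''

open Matrix

lemma Pi.single_le_of_le_apply {ι : Type*} [DecidableEq ι] {f : ι → ℕ} {l : ι} {c : ℕ}
    (h : c ≤ f l) : Pi.single l c ≤ f := fun i => by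
  rcases eq_or_ne i l with rfl | hi <;> simp [*]

variable {M : ℕ} {n : Fin M → ℕ}

lemma mem_resonanceSet_iff {k : (Fin M → ℕ) × (Fin M → ℕ)} :
    k ∈ ResonanceSet M n ↔ n ⬝ᵥ k.1 = n ⬝ᵥ k.2 :=
  Iff.rfl

lemma tsub_mem_resonanceSet {k k' : (Fin M → ℕ) × (Fin M → ℕ)} (hk : k ∈ ResonanceSet M n)
    (hk' : k' ∈ ResonanceSet M n) (hle : k' ≤ k) : k - k' ∈ ResonanceSet M n := by
  have hsum : k' + (k - k') = k := add_tsub_cancel_of_le hle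
  rw [mem_resonanceSet_iff] at *
  rw [← hsum] at hk
  simp only [Prod.fst_add, Prod.snd_add, dotProduct_add] at hk
  omega

def elementaryResonance (n : Fin M → ℕ) (l m : Fin M) : (Fin M → ℕ) × (Fin M → ℕ) :=
  (Pi.single l (n m), Pi.single m (n l))

lemma elementaryResonance_mem (n : Fin M → ℕ) (l m : Fin M) :
    elementaryResonance n l m ∈ ResonanceSet M n := by
  rw [mem_resonanceSet_iff, elementaryResonance, dotProduct_single, dotProduct_single, mul_comm]

lemma elementaryResonance_ne_zero {l m : Fin M} (hm : n m ≠ 0) : elementaryResonance n l m ≠ 0 :=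
  fun h => hm (by simpa [elementaryResonance] using congr_fun (congr_arg Prod.fst h) l)

lemma exists_le_snd_of_sum_lt_fst (hn : ∀ l, 0 < n l) {k : (Fin M → ℕ) × (Fin M → ℕ)}
    (hk : k ∈ ResonanceSet M n) {l : Fin M} (hl : ∑ j, n j < k.1 l) : ∃ m, n l ≤ k.2 m := by
  by_contra! hlt
  have hlt_weight : n ⬝ᵥ k.2 < n ⬝ᵥ k.1 :=
    calc n ⬝ᵥ k.2 < ∑ j, n j * n l :=
          Finset.sum_lt_sum_of_nonempty ⟨l, Finset.mem_univ l⟩ fun j _ =>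
            Nat.mul_lt_mul_of_pos_left (hlt j) (hn j)
      _ = n l * ∑ j, n j := by rw [← Finset.sum_mul, mul_comm]
      _ < n l * k.1 l := Nat.mul_lt_mul_of_pos_left hl (hn l)
      _ ≤ n ⬝ᵥ k.1 :=
          Finset.single_le_sum (f := fun i => n i * k.1 i) (fun _ _ => Nat.zero_le _)
            (Finset.mem_univ l)
  exact hlt_weight.ne hk.symm

namespace IsMinimalResonance

variable {k : (Fin M → ℕ) × (Fin M → ℕ)}

lemma eq_of_le (hk : IsMinimalResonance M n k) {k' : (Fin M → ℕ) × (Fin M → ℕ)}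
    (hk' : k' ∈ ResonanceSet M n) (h0 : k' ≠ 0) (hle : k' ≤ k) : k' = k := by
  by_contra hne
  refine hk.2.2 k' (k - k') hk' (tsub_mem_resonanceSet hk.1 hk' hle) h0 (fun h => ?_)
    (add_tsub_cancel_of_le hle).symm
  exact hne (le_antisymm hle (tsub_eq_zero_iff_le.mp h))

lemma swap (hk : IsMinimalResonance M n k) : IsMinimalResonance M n k.swap := by
  have swap_ne_zero : ∀ {p : (Fin M → ℕ) × (Fin M → ℕ)}, p ≠ 0 → p.swap ≠ 0 := fun {p} hp h =>
    hp (by rw [← Prod.swap_swap p, h, Prod.swap_zero])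
  refine ⟨hk.1.symm, swap_ne_zero hk.2.1, fun k' k'' h' h'' h0' h0'' heq => ?_⟩
  refine hk.2.2 k'.swap k''.swap h'.symm h''.symm (swap_ne_zero h0') (swap_ne_zero h0'') ?_
  rw [← Prod.swap_add, ← heq, Prod.swap_swap]

lemma fst_le_sum (hn : ∀ l, 0 < n l) (hk : IsMinimalResonance M n k) (l : Fin M) :
    k.1 l ≤ ∑ j, n j := by
  by_contra! hl
  obtain ⟨m, hm⟩ := exists_le_snd_of_sum_lt_fst hn hk.1 hl
  have hnm : n m ≤ ∑ j, n j :=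
    Finset.single_le_sum (fun _ _ => Nat.zero_le _) (Finset.mem_univ m)
  have hle : elementaryResonance n l m ≤ k :=
    ⟨Pi.single_le_of_le_apply (by omega), Pi.single_le_of_le_apply hm⟩
  have heq :=
    hk.eq_of_le (elementaryResonance_mem n l m) (elementaryResonance_ne_zero (hn m).ne') hle
  have hkl : k.1 l = n m := by simp [← heq, elementaryResonance]
  omega

lemma snd_le_sum (hn : ∀ l, 0 < n l) (hk : IsMinimalResonance M n k) (l : Fin M) :
    k.2 l ≤ ∑ j, n j :=
  hk.swap.fst_le_sum hn l

end IsMinimalResonance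

/-- Every minimal resonance element has all components bounded by `Σ n`, and
the set of minimal resonance elements is finite. -/
theorem minimal_resonance_bounded_and_finite
    (M : ℕ) (n : Fin M → ℕ) (hn : ∀ l, 0 < n l) :
    (∀ k, IsMinimalResonance M n k →
      ∀ l, k.1 l ≤ ∑ j, n j ∧ k.2 l ≤ ∑ j, n j) ∧
    {k | IsMinimalResonance M n k}.Finite := by
  have hbound : ∀ k, IsMinimalResonance M n k → ∀ l, k.1 l ≤ ∑ j, n j ∧ k.2 l ≤ ∑ j, n j :=
    fun k hk l => ⟨hk.fst_le_sum hn l, hk.snd_le_sum hn l⟩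
  let bound : Fin M → ℕ := fun _ => ∑ j, n j
  refine ⟨hbound, ((Set.finite_Iic bound).prod (Set.finite_Iic bound)).subset fun k hk => ?_⟩
  exact ⟨fun l => (hbound k hk l).1, fun l => (hbound k hk l).2⟩
end

section
/- For α, β ∈ ℤ^M write α_+ and α_- for the componentwise positive and negative parts (so α = α_+ − α_-, α_+, α_- ∈ ℤ_+^M, α_{+l}α_{-l} = 0), define [α,β] = α_+β_- − α_-β_+ (componentwise products), and define α∘̇β = min(α_+ + β_+, α_- + β_-) ∈ ℤ_+^M (componentwise minimum). Then [α+β, γ] = [α,γ] + [β,γ] + (α∘̇β)·γ, where (α∘̇β)·γ denotes the componentwise product of α∘̇β with γ. -/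
/-!
Write `m = (a⁺ + b⁺) ⊓ (a⁻ + b⁻)`. Since `a⁺ + b⁺` and `a⁻ + b⁻` differ by `a + b`, removing their
common part `m` leaves the positive and negative parts of `a + b`:
`(a + b)⁺ = a⁺ + b⁺ - m` and `(a + b)⁻ = a⁻ + b⁻ - m`. Substituting into the bracket, the two
copies of `m` combine to `m * (c⁺ - c⁻) = m * c`.
-/

/-- Componentwise positive part of an integer vector. -/
def vpos {M : ℕ} (α : Fin M → ℤ) : Fin M → ℤ := fun l => max (α l) 0

/-- Componentwise negative part of an integer vector. -/
def vneg {M : ℕ} (α : Fin M → ℤ) : Fin M → ℤ := fun l => max (-(α l)) 0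

/-- The bracket `[α,β] = α_+ β_- − α_- β_+` (componentwise products). -/
def zBracket {M : ℕ} (α β : Fin M → ℤ) : Fin M → ℤ :=
  fun l => vpos α l * vneg β l - vneg α l * vpos β l

/-- The anomaly `α ∘̇ β = min(α_+ + β_+, α_- + β_-)` (componentwise). -/
def anomaly {M : ℕ} (α β : Fin M → ℤ) : Fin M → ℤ :=
  fun l => min (vpos α l + vpos β l) (vneg α l + vneg β l)

section LatticeOrderedGroup

variable {α : Type*} [Lattice α] [AddCommGroup α] [AddLeftMono α]

theorem posPart_add_sub_negPart_add (a b : α) : (a⁺ + b⁺) - (a⁻ + b⁻) = a + b := by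
  rw [add_sub_add_comm, posPart_sub_negPart, posPart_sub_negPart]

theorem posPart_add_eq_sub_inf (a b : α) :
    (a + b)⁺ = a⁺ + b⁺ - (a⁺ + b⁺) ⊓ (a⁻ + b⁻) := by
  rw [inf_eq_sub_posPart_sub, sub_sub_cancel, posPart_add_sub_negPart_add]

theorem negPart_add_eq_sub_inf (a b : α) :
    (a + b)⁻ = a⁻ + b⁻ - (a⁺ + b⁺) ⊓ (a⁻ + b⁻) := by
  rw [inf_comm, inf_eq_sub_posPart_sub, sub_sub_cancel, ← neg_sub,
    posPart_add_sub_negPart_add, posPart_neg]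

end LatticeOrderedGroup

theorem posPart_add_mul_negPart_sub_negPart_add_mul_posPart {R : Type*} [CommRing R] [Lattice R]
    [AddLeftMono R] (a b c : R) :
    (a + b)⁺ * c⁻ - (a + b)⁻ * c⁺ =
      (a⁺ * c⁻ - a⁻ * c⁺) + (b⁺ * c⁻ - b⁻ * c⁺) + ((a⁺ + b⁺) ⊓ (a⁻ + b⁻)) * c := by
  rw [posPart_add_eq_sub_inf, negPart_add_eq_sub_inf]
  linear_combination ((a⁺ + b⁺) ⊓ (a⁻ + b⁻)) * posPart_sub_negPart c

/-- The anomalous additivity law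
`[α+β, γ] = [α,γ] + [β,γ] + (α ∘̇ β)·γ`, componentwise. -/
theorem zBracket_add_anomaly {M : ℕ} (α β γ : Fin M → ℤ) (l : Fin M) :
    zBracket (α + β) γ l = zBracket α γ l + zBracket β γ l +
      anomaly α β l * γ l :=
  -- on `ℤ`, `max x 0` and `max (-x) 0` are `x⁺` and `x⁻` by definition
  posPart_add_mul_negPart_sub_negPart_add_mul_posPart (α l) (β l) (γ l)
end

section
/- For α, β, γ ∈ ℤ^M, with α∘̇β = min(α_+ + β_+, α_- + β_-) componentwise (positive/negative parts taken componentwise), the following identities hold: (i) α∘̇β = α_+ + β_+ − (α+β)_+ = α_- + β_- − (α+β)_-; (ii) (α∘̇β) + ((α+β)∘̇γ) = (α∘̇(β+γ)) + (β∘̇γ). -/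
/-!
Writing `x = a⁺ + b⁺` and `y = a⁻ + b⁻`, we have `x - y = a + b`, so
`x ⊓ y = x - (x - y)⁺ = a⁺ + b⁺ - (a + b)⁺`: the anomaly is the defect of additivity of the
positive part. Any such defect `p a + p b - p (a + b)` is a 2-cocycle, which is identity (ii).
-/

section LatticeOrderedGroup

variable {G : Type*} [Lattice G] [AddCommGroup G] [IsOrderedAddMonoid G]

theorem posPart_add_inf_negPart_add (a b : G) :
    (a⁺ + b⁺) ⊓ (a⁻ + b⁻) = a⁺ + b⁺ - (a + b)⁺ := by
  have hsub : a⁺ + b⁺ - (a⁻ + b⁻) = a + b := by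
    rw [add_sub_add_comm, posPart_sub_negPart, posPart_sub_negPart]
  rw [inf_eq_sub_posPart_sub, hsub]

theorem negPart_add_inf_posPart_add (a b : G) :
    (a⁺ + b⁺) ⊓ (a⁻ + b⁻) = a⁻ + b⁻ - (a + b)⁻ := by
  have h := posPart_add_inf_negPart_add (-a) (-b)
  rwa [posPart_neg, posPart_neg, negPart_neg, negPart_neg, inf_comm, ← neg_add,
    posPart_neg] at h

end LatticeOrderedGroup

def addDefect {G H : Type*} [Add G] [AddCommGroup H] (p : G → H) (a b : G) : H :=
  p a + p b - p (a + b)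

theorem addDefect_add_addDefect {G H : Type*} [AddSemigroup G] [AddCommGroup H] (p : G → H)
    (a b c : G) :
    addDefect p a b + addDefect p (a + b) c = addDefect p a (b + c) + addDefect p b c := by
  simp only [addDefect, add_assoc]
  abel

section Anomaly

variable {M : ℕ}

-- `vpos`, `vneg` and `anomaly` unfold definitionally to `(·)⁺`, `(·)⁻` and `⊓` on `Fin M → ℤ`.

theorem anomaly_eq_vpos_add_sub (α β : Fin M → ℤ) :
    anomaly α β = vpos α + vpos β - vpos (α + β) :=
  posPart_add_inf_negPart_add α β

theorem anomaly_eq_vneg_add_sub (α β : Fin M → ℤ) :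
    anomaly α β = vneg α + vneg β - vneg (α + β) :=
  negPart_add_inf_posPart_add α β

end Anomaly

/-- Identities for the anomaly:
`α∘̇β = α_+ + β_+ − (α+β)_+ = α_- + β_- − (α+β)_-` and the cocycle identity
`(α∘̇β) + ((α+β)∘̇γ) = (α∘̇(β+γ)) + (β∘̇γ)`. -/
theorem anomaly_identities {M : ℕ} (α β γ : Fin M → ℤ) (l : Fin M) :
    anomaly α β l = vpos α l + vpos β l - vpos (α + β) l ∧
    anomaly α β l = vneg α l + vneg β l - vneg (α + β) l ∧
    anomaly α β l + anomaly (α + β) γ l =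
      anomaly α (β + γ) l + anomaly β γ l := by
  refine ⟨congrFun (anomaly_eq_vpos_add_sub α β) l, congrFun (anomaly_eq_vneg_add_sub α β) l, ?_⟩
  simp only [anomaly_eq_vpos_add_sub]
  exact congrFun (addDefect_add_addDefect vpos α β γ) l
end

section
/- Let n_1, n_2 be positive integers, and consider the 4-dimensional Poisson structure on ℝ^4 with real coordinates (A_1, A_2, Re A_α, Im A_α) determined by {A_α, Ā_α} = i(n_2^2 A_2 − n_1^2 A_1) A_1^{n_2−1} A_2^{n_1−1}, {A_α, A_1} = i n_2 A_α, {A_α, A_2} = −i n_1 A_α, {A_1, A_2} = 0 (extended as a biderivation to all polynomials). Then this bracket satisfies the Jacobi identity on all of ℝ^4, and the functions C_0 = n_1 A_1 + n_2 A_2 and C_1 = |A_α|^2 − A_1^{n_2} A_2^{n_1} are Casimir functions (they Poisson-commute with A_1, A_2, A_α, Ā_α). -/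
noncomputable section

/-- Partial derivative in the `i`-th coordinate of a function on `ℝ⁴`. -/
def pd (i : Fin 4) (F : (Fin 4 → ℝ) → ℝ) (x : Fin 4 → ℝ) : ℝ :=
  deriv (fun t => F (Function.update x i t)) (x i)

/-- The function `h = (n₂² A₂ − n₁² A₁) A₁^{n₂−1} A₂^{n₁−1}` appearing in
`{A_α, Ā_α} = i h`; coordinates `x = (A₁, A₂, Re A_α, Im A_α)`. -/
def hres (n1 n2 : ℕ) (x : Fin 4 → ℝ) : ℝ :=
  ((n2 : ℝ)^2 * x 1 - (n1 : ℝ)^2 * x 0) * (x 0) ^ (n2 - 1) * (x 1) ^ (n1 - 1)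

/-- The Poisson bivector determined by the relations
`{A_α, Ā_α} = i h`, `{A_α, A₁} = i n₂ A_α`, `{A_α, A₂} = −i n₁ A_α`,
`{A₁, A₂} = 0` in real coordinates `(A₁, A₂, u, v)` with `A_α = u + iv`. -/
def resTensor (n1 n2 : ℕ) : Fin 4 → Fin 4 → (Fin 4 → ℝ) → ℝ :=
  ![![fun _ => 0, fun _ => 0, fun x => (n2 : ℝ) * x 3, fun x => -(n2 : ℝ) * x 2],
    ![fun _ => 0, fun _ => 0, fun x => -(n1 : ℝ) * x 3, fun x => (n1 : ℝ) * x 2],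
    ![fun x => -(n2 : ℝ) * x 3, fun x => (n1 : ℝ) * x 3, fun _ => 0,
      fun x => -hres n1 n2 x / 2],
    ![fun x => (n2 : ℝ) * x 2, fun x => -(n1 : ℝ) * x 2,
      fun x => hres n1 n2 x / 2, fun _ => 0]]

/-- The bracket `{F,G} = Σ_{i,j} π_{ij} ∂_i F ∂_j G` defined by the
bivector `resTensor`. -/
def resPB (n1 n2 : ℕ) (F G : (Fin 4 → ℝ) → ℝ) (x : Fin 4 → ℝ) : ℝ :=
  ∑ i, ∑ j, resTensor n1 n2 i j x * pd i F x * pd j G x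

/-- The coordinate functions. -/
def coordF (i : Fin 4) : (Fin 4 → ℝ) → ℝ := fun x => x i

/-- The Casimir `C₀ = n₁ A₁ + n₂ A₂`. -/
def Cas0 (n1 n2 : ℕ) : (Fin 4 → ℝ) → ℝ :=
  fun x => (n1 : ℝ) * x 0 + (n2 : ℝ) * x 1

/-- The Casimir `C₁ = |A_α|² − A₁^{n₂} A₂^{n₁}`. -/
def Cas1 (n1 n2 : ℕ) : (Fin 4 → ℝ) → ℝ :=
  fun x => (x 2)^2 + (x 3)^2 - (x 0) ^ n2 * (x 1) ^ n1

/-! Since `{F, x_k} = Σ_i π_{ik} ∂_i F`, the inner brackets of the Jacobi identity on coordinates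
are entries of `π`, and the identity becomes a finite computation with the entries of `π` and their
first derivatives. The only nonlinear entry, `π_{uv} = -h/2`, depends on `A₁, A₂` alone, and this
is all the computation needs: Jacobi holds for every such `h`. The Casimir property of `C₁` is what
pins `h` down: `{C₁, u} = v (n₂ ∂₁C₁ - n₁ ∂₂C₁ + h)`, so `h = n₂ ∂₁g - n₁ ∂₂g` for
`g = A₁^{n₂} A₂^{n₁}`. -/

def resonanceBivector (a b : ℝ) (h : (Fin 4 → ℝ) → ℝ) : Fin 4 → Fin 4 → (Fin 4 → ℝ) → ℝ :=
  ![![fun _ => 0, fun _ => 0, fun x => a * x 3, fun x => -a * x 2],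
    ![fun _ => 0, fun _ => 0, fun x => -b * x 3, fun x => b * x 2],
    ![fun x => -a * x 3, fun x => b * x 3, fun _ => 0, fun x => -h x / 2],
    ![fun x => a * x 2, fun x => -b * x 2, fun x => h x / 2, fun _ => 0]]

def bivectorBracket (π : Fin 4 → Fin 4 → (Fin 4 → ℝ) → ℝ) (F G : (Fin 4 → ℝ) → ℝ)
    (x : Fin 4 → ℝ) : ℝ :=
  ∑ i, ∑ j, π i j x * pd i F x * pd j G x

theorem resPB_eq_bivectorBracket (n1 n2 : ℕ) :
    resPB n1 n2 = bivectorBracket (resonanceBivector n2 n1 (hres n1 n2)) :=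
  rfl

section PartialDerivative

variable (i : Fin 4) (x : Fin 4 → ℝ)

theorem pd_eq_of_hasDerivAt {F : (Fin 4 → ℝ) → ℝ} {d : ℝ}
    (hF : HasDerivAt (fun t => F (Function.update x i t)) d (x i)) : pd i F x = d :=
  hF.deriv

theorem pd_eq_zero_of_update_eq {F : (Fin 4 → ℝ) → ℝ}
    (hF : ∀ t, F (Function.update x i t) = F x) : pd i F x = 0 := by
  simp only [pd, hF, deriv_const]

theorem pd_const (c : ℝ) : pd i (fun _ => c) x = 0 :=
  pd_eq_zero_of_update_eq i x fun _ => rfl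

theorem pd_const_mul_apply (c : ℝ) (j : Fin 4) :
    pd i (fun y => c * y j) x = if j = i then c else 0 := by
  rcases eq_or_ne j i with rfl | hji
  · simpa using pd_eq_of_hasDerivAt j x (by simpa using (hasDerivAt_id (x j)).const_mul c)
  · simpa [hji] using pd_eq_zero_of_update_eq i x fun t => by simp [Function.update_of_ne hji]

theorem pd_coordF (j : Fin 4) : pd i (coordF j) x = if j = i then 1 else 0 := by
  unfold coordF
  simpa using pd_const_mul_apply i x 1 j

theorem pd_neg (F : (Fin 4 → ℝ) → ℝ) : pd i (fun y => -F y) x = -pd i F x :=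
  deriv.neg

theorem pd_div_const (F : (Fin 4 → ℝ) → ℝ) (c : ℝ) :
    pd i (fun y => F y / c) x = pd i F x / c :=
  deriv_div_const c

end PartialDerivative

section Bracket

variable (π : Fin 4 → Fin 4 → (Fin 4 → ℝ) → ℝ)

theorem bivectorBracket_coordF_right (F : (Fin 4 → ℝ) → ℝ) (k : Fin 4) (x : Fin 4 → ℝ) :
    bivectorBracket π F (coordF k) x = ∑ i, π i k x * pd i F x := by
  simp [bivectorBracket, pd_coordF]

theorem bivectorBracket_coordF_coordF (i j : Fin 4) :
    bivectorBracket π (coordF i) (coordF j) = π i j := by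
  funext x
  simp [bivectorBracket_coordF_right, pd_coordF]

end Bracket

theorem resonanceBivector_jacobi (a b : ℝ) (h : (Fin 4 → ℝ) → ℝ)
    (h2 : ∀ x, pd 2 h x = 0) (h3 : ∀ x, pd 3 h x = 0) (i j k : Fin 4) (x : Fin 4 → ℝ) :
    let π := resonanceBivector a b h
    bivectorBracket π (bivectorBracket π (coordF i) (coordF j)) (coordF k) x +
      bivectorBracket π (bivectorBracket π (coordF j) (coordF k)) (coordF i) x +
      bivectorBracket π (bivectorBracket π (coordF k) (coordF i)) (coordF j) x = 0 := by
  simp only [bivectorBracket_coordF_coordF, bivectorBracket_coordF_right, Fin.sum_univ_four]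
  fin_cases i <;> fin_cases j <;> fin_cases k <;>
    simp [resonanceBivector, pd_const, pd_const_mul_apply, neg_div, pd_neg, pd_div_const, h2, h3] <;>
    ring

section Resonance

variable (n1 n2 : ℕ) (x : Fin 4 → ℝ)

theorem hres_update (i : Fin 4) (hi0 : i ≠ 0) (hi1 : i ≠ 1) (t : ℝ) :
    hres n1 n2 (Function.update x i t) = hres n1 n2 x := by
  simp [hres, Function.update_of_ne hi0.symm, Function.update_of_ne hi1.symm]

theorem hres_eq_of_pos (h1 : 0 < n1) (h2 : 0 < n2) :
    hres n1 n2 x = n2 ^ 2 * x 0 ^ (n2 - 1) * x 1 ^ n1 - n1 ^ 2 * x 0 ^ n2 * x 1 ^ (n1 - 1) := by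
  obtain ⟨m1, rfl⟩ := Nat.exists_eq_add_one.mpr h1
  obtain ⟨m2, rfl⟩ := Nat.exists_eq_add_one.mpr h2
  simp only [hres, Nat.add_sub_cancel, pow_succ]
  ring

theorem pd_Cas0 (i : Fin 4) : pd i (Cas0 n1 n2) x = ![(n1 : ℝ), n2, 0, 0] i := by
  fin_cases i <;> apply pd_eq_of_hasDerivAt <;> simp [Cas0]
  · simpa using (hasDerivAt_id (x 0)).const_mul (n1 : ℝ)
  · simpa using (hasDerivAt_id (x 1)).const_mul (n2 : ℝ)
  all_goals exact hasDerivAt_const _ _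

theorem pd_Cas1 (i : Fin 4) :
    pd i (Cas1 n1 n2) x = ![-(n2 * x 0 ^ (n2 - 1) * x 1 ^ n1), -(n1 * x 0 ^ n2 * x 1 ^ (n1 - 1)),
      2 * x 2, 2 * x 3] i := by
  fin_cases i <;> apply pd_eq_of_hasDerivAt <;> simp [Cas1]
  · exact ((hasDerivAt_pow n2 (x 0)).mul_const _).const_sub _
  · exact (((hasDerivAt_pow n1 (x 1)).const_mul _).const_sub _).congr_deriv (by ring)
  · simpa using hasDerivAt_pow 2 (x 2)
  · simpa using hasDerivAt_pow 2 (x 3)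

theorem resPB_Cas0_coordF (k : Fin 4) : resPB n1 n2 (Cas0 n1 n2) (coordF k) x = 0 := by
  rw [resPB_eq_bivectorBracket, bivectorBracket_coordF_right]
  fin_cases k <;> simp [Fin.sum_univ_four, pd_Cas0, resonanceBivector] <;> ring

theorem resPB_Cas1_coordF (h1 : 0 < n1) (h2 : 0 < n2) (k : Fin 4) :
    resPB n1 n2 (Cas1 n1 n2) (coordF k) x = 0 := by
  rw [resPB_eq_bivectorBracket, bivectorBracket_coordF_right]
  fin_cases k <;> simp [Fin.sum_univ_four, pd_Cas1, resonanceBivector, hres_eq_of_pos n1 n2 x h1 h2] <;>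
    ring

end Resonance

/-- The Jacobi identity holds for the bracket on all of `ℝ⁴` (verified on
coordinate functions), and `C₀`, `C₁` are Casimir functions. -/
theorem resonance_bracket_jacobi_and_casimirs
    (n1 n2 : ℕ) (h1 : 0 < n1) (h2 : 0 < n2) :
    (∀ i j k : Fin 4, ∀ x,
      resPB n1 n2 (resPB n1 n2 (coordF i) (coordF j)) (coordF k) x +
      resPB n1 n2 (resPB n1 n2 (coordF j) (coordF k)) (coordF i) x +
      resPB n1 n2 (resPB n1 n2 (coordF k) (coordF i)) (coordF j) x = 0) ∧
    (∀ i : Fin 4, ∀ x, resPB n1 n2 (Cas0 n1 n2) (coordF i) x = 0) ∧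
    (∀ i : Fin 4, ∀ x, resPB n1 n2 (Cas1 n1 n2) (coordF i) x = 0) := by
  have hres_pd_two (x) : pd 2 (hres n1 n2) x = 0 :=
    pd_eq_zero_of_update_eq 2 x (hres_update n1 n2 x 2 (by decide) (by decide))
  have hres_pd_three (x) : pd 3 (hres n1 n2) x = 0 :=
    pd_eq_zero_of_update_eq 3 x (hres_update n1 n2 x 3 (by decide) (by decide))
  refine ⟨fun i j k x => ?_, fun k x => resPB_Cas0_coordF n1 n2 x k,
    fun k x => resPB_Cas1_coordF n1 n2 x h1 h2 k⟩
  rw [resPB_eq_bivectorBracket]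
  exact resonanceBivector_jacobi n2 n1 (hres n1 n2) hres_pd_two hres_pd_three i j k x

end
end

section
/- In the Weyl algebra with [ẑ_l, ẑ_j*] = ħ δ_{lj}, let n_1, n_2 be coprime positive integers and set Â_α = (ẑ_2*)^{n_1} ẑ_1^{n_2}, Â_α* = (ẑ_1*)^{n_2} ẑ_2^{n_1}, Â_1 = ẑ_1* ẑ_1, Â_2 = ẑ_2* ẑ_2. Then [Â_α, Â_1] = ħ n_2 Â_α, [Â_α, Â_2] = −ħ n_1 Â_α, [Â_1, Â_2] = 0, and [Â_α, Â_α*] = f(Â_1, Â_2), where f(A_1,A_2) = ρ(A_1 + ħ n_2, A_2 − ħ n_1) − ρ(A_1, A_2) with ρ(A_1,A_2) = A_1(A_1−ħ)⋯(A_1−(n_2−1)ħ) · (A_2+ħ)(A_2+2ħ)⋯(A_2+n_1ħ). Moreover Ĉ_0 = n_1 Â_1 + n_2 Â_2 commutes with Â_α, Â_α*, Â_1, Â_2, and Â_α* Â_α = ρ(Â_1, Â_2). -/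
/-!
Write `N = y x` for a Weyl pair `x y - y x = ℏ`. Then `x (N + c) = (N + c + ℏ) x` and
`(N + c) y = y (N + c + ℏ)`, so `x^n y^n` and `y^n x^n` are `ℏ`-step factorial products in `N`;
peeling the factor `x y = N + ℏ` or `y x = N` off the middle and pushing it to either end gives
each product both as a polynomial in `N` and as one in `N ± ℏ n`. The two modes commute, so
`Â_α = (ẑ₂*)^{n₁} ẑ₁^{n₂}` shifts `Â₁` by `ℏ n₂` and `Â₂` by `-ℏ n₁` (shifts that `Ĉ₀` cancels),
and `Â_α* Â_α`, `Â_α Â_α*` factor mode by mode into `ρ(Â₁, Â₂)` and `ρ(Â₁ + ℏ n₂, Â₂ - ℏ n₁)`.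
-/

noncomputable section

variable {A : Type*} [Ring A] [Algebra ℂ A]

/-- `Â_α = (ẑ₂*)^{n₁} ẑ₁^{n₂}`. -/
def Aalpha (n1 n2 : ℕ) (z zs : Fin 2 → A) : A := (zs 1) ^ n1 * (z 0) ^ n2

/-- `Â_α* = (ẑ₁*)^{n₂} ẑ₂^{n₁}`. -/
def AalphaStar (n1 n2 : ℕ) (z zs : Fin 2 → A) : A := (zs 0) ^ n2 * (z 1) ^ n1

/-- `Â₁ = ẑ₁* ẑ₁`. -/
def Aone (z zs : Fin 2 → A) : A := zs 0 * z 0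

/-- `Â₂ = ẑ₂* ẑ₂`. -/
def Atwo (z zs : Fin 2 → A) : A := zs 1 * z 1

/-- `ρ(A₁,A₂) = A₁(A₁−ħ)⋯(A₁−(n₂−1)ħ) · (A₂+ħ)⋯(A₂+n₁ħ)`. -/
def rhoPoly (hb : ℂ) (n1 n2 : ℕ) (a1 a2 : A) : A :=
  (((List.range n2).map (fun j => a1 - ((j : ℂ) * hb) • (1 : A))).prod) *
  (((List.range n1).map (fun j => a2 + (((j : ℂ) + 1) * hb) • (1 : A))).prod)

/-- `f(A₁,A₂) = ρ(A₁ + ħn₂, A₂ − ħn₁) − ρ(A₁,A₂)`. -/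
def fPoly (hb : ℂ) (n1 n2 : ℕ) (a1 a2 : A) : A :=
  rhoPoly hb n1 n2 (a1 + (hb * (n2 : ℂ)) • (1 : A))
    (a2 - (hb * (n1 : ℂ)) • (1 : A)) - rhoPoly hb n1 n2 a1 a2

/-- `Ĉ₀ = n₁ Â₁ + n₂ Â₂`. -/
def Czero (n1 n2 : ℕ) (z zs : Fin 2 → A) : A :=
  (n1 : ℂ) • Aone z zs + (n2 : ℂ) • Atwo z zs

section WeylPair

variable {R B : Type*} [CommRing R] [Ring B] [Algebra R B]

def descProd (ℏ : R) (a : B) (n : ℕ) : B :=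
  ((List.range n).map fun j : ℕ => a - ((j : R) * ℏ) • (1 : B)).prod

def ascProd (ℏ : R) (a : B) (n : ℕ) : B :=
  ((List.range n).map fun j : ℕ => a + (((j : R) + 1) * ℏ) • (1 : B)).prod

variable {ℏ : R}

theorem descProd_succ (a : B) (n : ℕ) :
    descProd ℏ a (n + 1) = descProd ℏ a n * (a - (ℏ * n) • 1) := by
  simp [descProd, List.range_succ, mul_comm ℏ]

theorem descProd_succ' (a : B) (n : ℕ) :
    descProd ℏ a (n + 1) = a * descProd ℏ (a - ℏ • 1) n := by
  simp only [descProd, List.range_succ_eq_map, List.map_cons, List.map_map, List.prod_cons]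
  congr 3
  · simp
  · funext j
    simp only [Function.comp_apply]
    push_cast
    module

theorem ascProd_succ (a : B) (n : ℕ) :
    ascProd ℏ a (n + 1) = ascProd ℏ a n * (a + (ℏ + ℏ * n) • 1) := by
  simp only [ascProd, List.range_succ, List.map_append, List.prod_append, List.map_cons,
    List.map_nil, List.prod_cons, List.prod_nil, mul_one]
  congr 3
  ring

theorem ascProd_succ' (a : B) (n : ℕ) :
    ascProd ℏ a (n + 1) = (a + ℏ • 1) * ascProd ℏ (a + ℏ • 1) n := by
  simp only [ascProd, List.range_succ_eq_map, List.map_cons, List.map_map, List.prod_cons]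
  congr 3
  · simp
  · funext j
    simp only [Function.comp_apply]
    push_cast
    module

-- For a Weyl pair `x * y - y * x = ℏ • 1`, `number` in the names below is `y * x`.
variable {x y : B}

theorem mul_number_add_smul (h : x * y - y * x = ℏ • 1) (c : R) :
    x * (y * x + c • 1) = (y * x + (c + ℏ) • 1) * x := by
  rw [sub_eq_iff_eq_add'] at h
  rw [mul_add, ← mul_assoc, h, add_mul, add_mul, add_smul, add_mul, smul_one_mul, smul_one_mul,
    mul_smul_one]
  abel

theorem number_add_smul_mul (h : x * y - y * x = ℏ • 1) (c : R) :
    (y * x + c • 1) * y = y * (y * x + (c + ℏ) • 1) := by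
  rw [sub_eq_iff_eq_add'] at h
  rw [add_mul, mul_assoc, h, mul_add, mul_add, add_smul, mul_add, smul_one_mul, mul_smul_one,
    mul_smul_one]
  abel

theorem pow_mul_number_add_smul (h : x * y - y * x = ℏ • 1) (c : R) (n : ℕ) :
    x ^ n * (y * x + c • 1) = (y * x + (c + ℏ * n) • 1) * x ^ n := by
  induction n generalizing c with
  | zero => simp
  | succ n ih =>
    rw [pow_succ', mul_assoc, ih, ← mul_assoc, mul_number_add_smul h, mul_assoc, ← pow_succ']
    push_cast
    ring_nf

theorem number_add_smul_mul_pow (h : x * y - y * x = ℏ • 1) (c : R) (n : ℕ) :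
    (y * x + c • 1) * y ^ n = y ^ n * (y * x + (c + ℏ * n) • 1) := by
  induction n generalizing c with
  | zero => simp
  | succ n ih =>
    rw [pow_succ, ← mul_assoc, ih, mul_assoc, number_add_smul_mul h, ← mul_assoc, ← pow_succ]
    push_cast
    ring_nf

theorem pow_mul_number (h : x * y - y * x = ℏ • 1) (n : ℕ) :
    x ^ n * (y * x) = (y * x + (ℏ * n) • 1) * x ^ n := by
  simpa using pow_mul_number_add_smul h 0 n

theorem pow_mul_number' (h : x * y - y * x = ℏ • 1) (n : ℕ) :
    y ^ n * (y * x) = (y * x + (-(ℏ * n)) • 1) * y ^ n := by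
  simpa using (number_add_smul_mul_pow h (-(ℏ * n)) n).symm

theorem number_mul_pow (h : x * y - y * x = ℏ • 1) (n : ℕ) :
    y * x * x ^ n = x ^ n * (y * x - (ℏ * n) • 1) := by
  simpa [sub_eq_add_neg] using (pow_mul_number_add_smul h (-(ℏ * n)) n).symm

theorem pow_mul_pow_eq_descProd (h : x * y - y * x = ℏ • 1) (n : ℕ) :
    y ^ n * x ^ n = descProd ℏ (y * x) n := by
  induction n with
  | zero => simp [descProd]
  | succ n ih =>
    calc y ^ (n + 1) * x ^ (n + 1) = y ^ n * (y * x * x ^ n) := by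
          rw [pow_succ, pow_succ']; simp only [mul_assoc]
      _ = descProd ℏ (y * x) (n + 1) := by
          rw [number_mul_pow h, ← mul_assoc, ih, descProd_succ]

theorem pow_mul_pow_eq_ascProd (h : x * y - y * x = ℏ • 1) (n : ℕ) :
    x ^ n * y ^ n = ascProd ℏ (y * x) n := by
  induction n with
  | zero => simp [ascProd]
  | succ n ih =>
    calc x ^ (n + 1) * y ^ (n + 1) = x ^ n * ((y * x + ℏ • 1) * y ^ n) := by
          rw [pow_succ, pow_succ', ← sub_eq_iff_eq_add'.mp h]; simp only [mul_assoc]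
      _ = ascProd ℏ (y * x) (n + 1) := by
          rw [number_add_smul_mul_pow h, ← mul_assoc, ih, ascProd_succ]

theorem pow_mul_pow_eq_descProd_add (h : x * y - y * x = ℏ • 1) (n : ℕ) :
    x ^ n * y ^ n = descProd ℏ (y * x + (ℏ * n) • 1) n := by
  induction n with
  | zero => simp [descProd]
  | succ n ih =>
    calc x ^ (n + 1) * y ^ (n + 1) = x ^ n * (y * x + ℏ • 1) * y ^ n := by
          rw [pow_succ, pow_succ', ← sub_eq_iff_eq_add'.mp h]; simp only [mul_assoc]
      _ = descProd ℏ (y * x + (ℏ * ↑(n + 1)) • 1) (n + 1) := by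
          have hshift : y * x + (ℏ * ↑(n + 1)) • 1 - ℏ • 1 = y * x + (ℏ * n) • 1 := by
            push_cast; module
          rw [descProd_succ', hshift, pow_mul_number_add_smul h, mul_assoc, ih]
          congr 1; push_cast; module

theorem pow_mul_pow_eq_ascProd_sub (h : x * y - y * x = ℏ • 1) (n : ℕ) :
    y ^ n * x ^ n = ascProd ℏ (y * x - (ℏ * n) • 1) n := by
  induction n with
  | zero => simp [ascProd]
  | succ n ih =>
    calc y ^ (n + 1) * x ^ (n + 1) = y ^ n * (y * x) * x ^ n := by
          rw [pow_succ, pow_succ']; simp only [mul_assoc]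
      _ = ascProd ℏ (y * x - (ℏ * ↑(n + 1)) • 1) (n + 1) := by
          have hshift : y * x - (ℏ * ↑(n + 1)) • 1 + ℏ • 1 = y * x - (ℏ * n) • 1 := by
            push_cast; module
          rw [ascProd_succ', hshift, pow_mul_number' h, mul_assoc, ih, sub_eq_add_neg, neg_smul]

end WeylPair

section TwoModes

variable {R B : Type*} [CommRing R] [Ring B] [Algebra R B] {ℏ : R} {x y x' y' : B}

theorem mul_number_of_commute (h : x * y - y * x = ℏ • 1) (hc : Commute y' (y * x))
    (m n : ℕ) : y' ^ m * x ^ n * (y * x) = (y * x + (ℏ * n) • 1) * (y' ^ m * x ^ n) := by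
  have hshift : Commute y' (y * x + (ℏ * n) • 1) :=
    hc.add_right ((Commute.one_right y').smul_right _)
  rw [mul_assoc, pow_mul_number h, ← mul_assoc, (hshift.pow_left m).eq, mul_assoc]

theorem mul_number_of_commute' (h' : x' * y' - y' * x' = ℏ • 1) (hc : Commute x (y' * x'))
    (m n : ℕ) :
    y' ^ m * x ^ n * (y' * x') = (y' * x' + (-(ℏ * m)) • 1) * (y' ^ m * x ^ n) := by
  rw [mul_assoc, (hc.pow_left n).eq, ← mul_assoc, pow_mul_number' h', mul_assoc]

theorem pow_mul_pow_mul_pow_mul_pow_eq_descProd_mul_ascProd (h : x * y - y * x = ℏ • 1)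
    (h' : x' * y' - y' * x' = ℏ • 1) (hxx' : Commute x x') (hxy' : Commute x y') (m n : ℕ) :
    y ^ n * x' ^ m * (y' ^ m * x ^ n) = descProd ℏ (y * x) n * ascProd ℏ (y' * x') m := by
  have hc : Commute (x' ^ m * y' ^ m) (x ^ n) :=
    (((hxx'.pow_right m).mul_right (hxy'.pow_right m)).pow_left n).symm
  calc y ^ n * x' ^ m * (y' ^ m * x ^ n) = y ^ n * ((x' ^ m * y' ^ m) * x ^ n) := by
        simp only [mul_assoc]
    _ = descProd ℏ (y * x) n * ascProd ℏ (y' * x') m := by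
        rw [hc.eq, ← mul_assoc, pow_mul_pow_eq_descProd h, pow_mul_pow_eq_ascProd h']

theorem pow_mul_pow_mul_pow_mul_pow_eq_descProd_add_mul_ascProd_sub (h : x * y - y * x = ℏ • 1)
    (h' : x' * y' - y' * x' = ℏ • 1) (hy'x : Commute y' x) (hy'y : Commute y' y) (m n : ℕ) :
    y' ^ m * x ^ n * (y ^ n * x' ^ m) =
      descProd ℏ (y * x + (ℏ * n) • 1) n * ascProd ℏ (y' * x' - (ℏ * m) • 1) m := by
  have hc : Commute (y' ^ m) (x ^ n * y ^ n) :=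
    ((hy'x.pow_right n).mul_right (hy'y.pow_right n)).pow_left m
  calc y' ^ m * x ^ n * (y ^ n * x' ^ m) = (y' ^ m * (x ^ n * y ^ n)) * x' ^ m := by
        simp only [mul_assoc]
    _ = descProd ℏ (y * x + (ℏ * n) • 1) n * ascProd ℏ (y' * x' - (ℏ * m) • 1) m := by
        rw [hc.eq, mul_assoc, pow_mul_pow_eq_descProd_add h, pow_mul_pow_eq_ascProd_sub h']

end TwoModes

section Shifts

variable {R B : Type*} [CommRing R] [Ring B] [Algebra R B] {a N N' : B} {s s' : R}

theorem mul_sub_mul_eq_smul_of_mul_eq (hN : a * N = (N + s • 1) * a) :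
    a * N - N * a = s • a := by
  rw [hN, add_mul, smul_one_mul, add_sub_cancel_left]

theorem commute_smul_add_smul_of_mul_eq (hN : a * N = (N + s • 1) * a)
    (hN' : a * N' = (N' + s' • 1) * a) {c c' : R} (hs : c * s + c' * s' = 0) :
    Commute (c • N + c' • N') a := by
  change (c • N + c' • N') * a = a * (c • N + c' • N')
  rw [mul_add, mul_smul_comm, mul_smul_comm, hN, hN']
  simp only [add_mul, smul_mul_assoc, one_mul]
  linear_combination (norm := module) -(hs • a)

end Shifts

-- `rhoPoly` maps over `List.range n` coerced to `List ℂ` through the list monad.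
theorem rhoPoly_eq_descProd_mul_ascProd (hb : ℂ) (n1 n2 : ℕ) (a1 a2 : A) :
    rhoPoly hb n1 n2 a1 a2 = descProd hb a1 n2 * ascProd hb a2 n1 := by
  simp only [rhoPoly, bind_pure_comp, List.map_eq_map, List.map_map]
  rfl

theorem quantum_resonance_algebra_relations_general
    (hb : ℂ) (n1 n2 : ℕ) (z zs : Fin 2 → A)
    (hzz : ∀ l j, z l * z j = z j * z l)
    (hss : ∀ l j, zs l * zs j = zs j * zs l)
    (hzs : ∀ l j, z l * zs j - zs j * z l = (if l = j then hb else 0) • (1 : A)) :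
    Aalpha n1 n2 z zs * Aone z zs - Aone z zs * Aalpha n1 n2 z zs =
      (hb * (n2 : ℂ)) • Aalpha n1 n2 z zs ∧
    Aalpha n1 n2 z zs * Atwo z zs - Atwo z zs * Aalpha n1 n2 z zs =
      (-(hb * (n1 : ℂ))) • Aalpha n1 n2 z zs ∧
    Aone z zs * Atwo z zs = Atwo z zs * Aone z zs ∧
    Aalpha n1 n2 z zs * AalphaStar n1 n2 z zs -
      AalphaStar n1 n2 z zs * Aalpha n1 n2 z zs =
      fPoly hb n1 n2 (Aone z zs) (Atwo z zs) ∧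
    Czero n1 n2 z zs * Aalpha n1 n2 z zs =
      Aalpha n1 n2 z zs * Czero n1 n2 z zs ∧
    Czero n1 n2 z zs * AalphaStar n1 n2 z zs =
      AalphaStar n1 n2 z zs * Czero n1 n2 z zs ∧
    Czero n1 n2 z zs * Aone z zs = Aone z zs * Czero n1 n2 z zs ∧
    Czero n1 n2 z zs * Atwo z zs = Atwo z zs * Czero n1 n2 z zs ∧
    AalphaStar n1 n2 z zs * Aalpha n1 n2 z zs =
      rhoPoly hb n1 n2 (Aone z zs) (Atwo z zs) := by
  have weyl (l : Fin 2) : z l * zs l - zs l * z l = hb • 1 := by simpa using hzs l l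
  have cross (l j : Fin 2) (hlj : l ≠ j) : Commute (z l) (zs j) :=
    sub_eq_zero.mp (by simpa [hlj] using hzs l j)
  have h00 : Commute (z 0) (z 1) := hzz 0 1
  have h01 : Commute (z 0) (zs 1) := cross 0 1 (by decide)
  have h10 : Commute (z 1) (zs 0) := cross 1 0 (by decide)
  have h11 : Commute (zs 0) (zs 1) := hss 0 1
  have hα1 : Aalpha n1 n2 z zs * Aone z zs = (Aone z zs + (hb * n2) • 1) * Aalpha n1 n2 z zs :=
    mul_number_of_commute (weyl 0) (h11.symm.mul_right h01.symm) n1 n2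
  have hα2 : Aalpha n1 n2 z zs * Atwo z zs =
      (Atwo z zs + (-(hb * n1)) • 1) * Aalpha n1 n2 z zs :=
    mul_number_of_commute' (weyl 1) (h01.mul_right h00) n1 n2
  have hβ1 : AalphaStar n1 n2 z zs * Aone z zs =
      (Aone z zs + (-(hb * n2)) • 1) * AalphaStar n1 n2 z zs :=
    mul_number_of_commute' (weyl 0) (h10.mul_right h00.symm) n2 n1
  have hβ2 : AalphaStar n1 n2 z zs * Atwo z zs =
      (Atwo z zs + (hb * n1) • 1) * AalphaStar n1 n2 z zs :=
    mul_number_of_commute (weyl 1) (h11.mul_right h10.symm) n2 n1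
  have hN : Commute (Aone z zs) (Atwo z zs) :=
    (h11.mul_right h10.symm).mul_left (h01.mul_right h00)
  have hρ : AalphaStar n1 n2 z zs * Aalpha n1 n2 z zs =
      rhoPoly hb n1 n2 (Aone z zs) (Atwo z zs) := by
    rw [rhoPoly_eq_descProd_mul_ascProd]
    exact pow_mul_pow_mul_pow_mul_pow_eq_descProd_mul_ascProd (weyl 0) (weyl 1) h00 h01 n1 n2
  refine ⟨mul_sub_mul_eq_smul_of_mul_eq hα1, mul_sub_mul_eq_smul_of_mul_eq hα2, hN.eq, ?_,
    (commute_smul_add_smul_of_mul_eq hα1 hα2 (by ring)).eq,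
    (commute_smul_add_smul_of_mul_eq hβ1 hβ2 (by ring)).eq,
    (((Commute.refl _).smul_left _).add_left (hN.symm.smul_left _)).eq,
    ((hN.smul_left _).add_left ((Commute.refl _).smul_left _)).eq, hρ⟩
  rw [fPoly, ← hρ, rhoPoly_eq_descProd_mul_ascProd]
  congr 1
  exact pow_mul_pow_mul_pow_mul_pow_eq_descProd_add_mul_ascProd_sub (weyl 0) (weyl 1) h01.symm
    h11.symm n1 n2

/-- Commutation relations of the quantum resonance algebra of the
two-dimensional `n₁ : n₂` oscillator, realized in any algebra carrying the
Weyl relations `[ẑ_l, ẑ_j*] = ħ δ_{lj}`. -/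
theorem quantum_resonance_algebra_relations
    (hb : ℂ) (n1 n2 : ℕ) (h1 : 0 < n1) (h2 : 0 < n2)
    (hcop : Nat.Coprime n1 n2) (z zs : Fin 2 → A)
    (hzz : ∀ l j, z l * z j = z j * z l)
    (hss : ∀ l j, zs l * zs j = zs j * zs l)
    (hzs : ∀ l j, z l * zs j - zs j * z l = (if l = j then hb else 0) • (1 : A)) :
    Aalpha n1 n2 z zs * Aone z zs - Aone z zs * Aalpha n1 n2 z zs =
      (hb * (n2 : ℂ)) • Aalpha n1 n2 z zs ∧
    Aalpha n1 n2 z zs * Atwo z zs - Atwo z zs * Aalpha n1 n2 z zs =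
      (-(hb * (n1 : ℂ))) • Aalpha n1 n2 z zs ∧
    Aone z zs * Atwo z zs = Atwo z zs * Aone z zs ∧
    Aalpha n1 n2 z zs * AalphaStar n1 n2 z zs -
      AalphaStar n1 n2 z zs * Aalpha n1 n2 z zs =
      fPoly hb n1 n2 (Aone z zs) (Atwo z zs) ∧
    Czero n1 n2 z zs * Aalpha n1 n2 z zs =
      Aalpha n1 n2 z zs * Czero n1 n2 z zs ∧
    Czero n1 n2 z zs * AalphaStar n1 n2 z zs =
      AalphaStar n1 n2 z zs * Czero n1 n2 z zs ∧
    Czero n1 n2 z zs * Aone z zs = Aone z zs * Czero n1 n2 z zs ∧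
    Czero n1 n2 z zs * Atwo z zs = Atwo z zs * Czero n1 n2 z zs ∧
    AalphaStar n1 n2 z zs * Aalpha n1 n2 z zs =
      rhoPoly hb n1 n2 (Aone z zs) (Atwo z zs) :=
  quantum_resonance_algebra_relations_general hb n1 n2 z zs hzz hss hzs

end
end
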